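/- arXiv:math/0610704 — 2 statements merged into one kernel-verified Lean document; each statement's English description precedes it below -/
import Mathlib

section
/- Any height-two classical tableau $t$ of width $k<s$ has at most two filling locations, and if it has two, they are consecutive integers and the height-two fill map $F_{2,s}(t)$ is independent of which is chosen. -/
/-! Type `D_n` alphabet `1 < 2 < ⋯ < n-1 < {n, n̄} < n-1̄ < ⋯ < 1̄`.
A letter is a nonzero integer `x` with `-n ≤ x ≤ n`; the barred letter `ā` is `-a`. -/

/-- Position of a letter in the type `Dₙ` alphabet. -/
def dpos (n : ℕ) (x : ℤ) : ℤ := if 0 < x then x else 2 * (n : ℤ) + x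

/-- The partial order on the type `Dₙ` alphabet: `n` and `n̄ = -n` are incomparable. -/
def dle (n : ℕ) (x y : ℤ) : Prop := x = y ∨ dpos n x < dpos n y

def isDLetter (n : ℕ) (x : ℤ) : Prop := x ≠ 0 ∧ -(n : ℤ) ≤ x ∧ x ≤ (n : ℤ)

/-- A height-two filling of a `2 × s` rectangle satisfying conditions (1) (rows weakly
increase) and (2) (in each column `(a/b)`, `b ≰ a`) of the height-two criterion. -/
structure Height2 (n s : ℕ) where
  top : ℕ → ℤ
  bot : ℕ → ℤ
  letter_top : ∀ i < s, isDLetter n (top i)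
  letter_bot : ∀ i < s, isDLetter n (bot i)
  row_top : ∀ i j, i ≤ j → j < s → dle n (top i) (top j)
  row_bot : ∀ i j, i ≤ j → j < s → dle n (bot i) (bot j)
  col : ∀ i < s, ¬ dle n (bot i) (top i)

/-- Condition (3): no configuration `(a/·)(a/ā)` or `(a/ā)(·/ā)` in adjacent columns. -/
def cond3 {n s : ℕ} (T : Height2 n s) : Prop :=
  ∀ i, i + 1 < s →
    ¬ (T.top i = T.top (i + 1) ∧ T.bot (i + 1) = -T.top (i + 1)) ∧
    ¬ (T.bot i = T.bot (i + 1) ∧ T.top i = -T.bot i)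

/-- Condition (4a): no adjacent configuration `(n-1/n)(n/\overline{n-1})` or
`(n-1/n̄)(n̄/\overline{n-1})`. -/
def cond4a {n s : ℕ} (T : Height2 n s) : Prop :=
  ∀ i, i + 1 < s →
    ¬ (T.top i = (n : ℤ) - 1 ∧ T.bot i = (n : ℤ) ∧
        T.top (i + 1) = (n : ℤ) ∧ T.bot (i + 1) = -((n : ℤ) - 1)) ∧
    ¬ (T.top i = (n : ℤ) - 1 ∧ T.bot i = -(n : ℤ) ∧
        T.top (i + 1) = -(n : ℤ) ∧ T.bot (i + 1) = -((n : ℤ) - 1))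

/-- Condition (4): no configuration `(n-1/n) ⋯ (n/\overline{n-1})` or
`(n-1/n̄) ⋯ (n̄/\overline{n-1})` with arbitrarily many intermediate columns. -/
def cond4 {n s : ℕ} (T : Height2 n s) : Prop :=
  ∀ i j, i < j → j < s →
    ¬ (T.top i = (n : ℤ) - 1 ∧ T.bot i = (n : ℤ) ∧
        T.top j = (n : ℤ) ∧ T.bot j = -((n : ℤ) - 1)) ∧
    ¬ (T.top i = (n : ℤ) - 1 ∧ T.bot i = -(n : ℤ) ∧
        T.top j = -(n : ℤ) ∧ T.bot j = -((n : ℤ) - 1))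

/-- Condition (5): no column `(1/1̄)`. -/
def cond5 {n s : ℕ} (T : Height2 n s) : Prop := ∀ i < s, ¬ (T.top i = 1 ∧ T.bot i = -1)

/-- Classical height-two tableaux: all five conditions of the height-two criterion
(conditions (1),(2) are part of `Height2`); these index `B(sϖ₂)`. -/
def classicalTab {n s : ℕ} (T : Height2 n s) : Prop := cond3 T ∧ cond4a T ∧ cond5 T

/-- Affine tableaux `𝒯(s)`: conditions (1),(2),(4) only. -/
def affineTab {n s : ℕ} (T : Height2 n s) : Prop := cond4a T

/-- `T'` (of width `s`) is obtained from `t` (of width `k`) by inserting `s - k`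
copies of the column `c` between columns `p` and `p + 1` of `t`. -/
def insertAt {n k : ℕ} (t : Height2 n k) (p : ℕ) (c : ℤ × ℤ) {s : ℕ}
    (T' : Height2 n s) : Prop :=
  (∀ i < p, T'.top i = t.top i ∧ T'.bot i = t.bot i) ∧
  (∀ i, p ≤ i → i < p + (s - k) → T'.top i = c.1 ∧ T'.bot i = c.2) ∧
  (∀ i, p + (s - k) ≤ i → i < s →
      T'.top i = t.top (i - (s - k)) ∧ T'.bot i = t.bot (i - (s - k)))

/-- First filling criterion `b_i ≤ ā_i ≤ b_{i+1}` at the interior location `i`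
(between 0-based columns `i - 1` and `i`). -/
def crit1 {n k : ℕ} (t : Height2 n k) (i : ℕ) : Prop :=
  dle n (t.bot (i - 1)) (-(t.top (i - 1))) ∧ dle n (-(t.top (i - 1))) (t.bot i)

/-- Second filling criterion `a_i ≤ b̄_{i+1} ≤ a_{i+1}` at the interior location `i`. -/
def crit2 {n k : ℕ} (t : Height2 n k) (i : ℕ) : Prop :=
  dle n (t.top (i - 1)) (-(t.bot i)) ∧ dle n (-(t.bot i)) (t.top i)

/-- The columns the fill map may insert at location `i`: at the boundary locations
`0` (prepending `(b̄_1/b_1)`) and `k` (appending `(a_k/ā_k)`), or at an interior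
location, the column prescribed by whichever filling criterion holds. -/
def choiceAt {n k : ℕ} (t : Height2 n k) (i : ℕ) (c : ℤ × ℤ) : Prop :=
  (i = 0 ∧ c = (-(t.bot 0), t.bot 0)) ∨
  (i = k ∧ c = (t.top (k - 1), -(t.top (k - 1)))) ∨
  (0 < i ∧ i < k ∧
    ((crit1 t i ∧ c = (t.top (i - 1), -(t.top (i - 1)))) ∨
     (crit2 t i ∧ c = (-(t.bot i), t.bot i))))

/-- `i` is a filling location of `t` (relative to target width `s`): some admissible
insertion there produces an affine tableau in `𝒯(s)`. -/
def fillLoc {n k : ℕ} (t : Height2 n k) (s i : ℕ) : Prop :=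
  i ≤ k ∧ ∃ (c : ℤ × ℤ) (T' : Height2 n s),
    choiceAt t i c ∧ insertAt t i c T' ∧ affineTab T'


section Aux

lemma dle_trans {n : ℕ} {x y z : ℤ} (h1 : dle n x y) (h2 : dle n y z) : dle n x z := by
  rcases h1 with h1 | h1
  · rwa [h1]
  · rcases h2 with h2 | h2
    · right; rwa [h2] at h1
    · right; exact lt_trans h1 h2

lemma dle_antisymm {n : ℕ} {x y : ℤ} (h1 : dle n x y) (h2 : dle n y x) : x = y := by
  rcases h1 with h1 | h1
  · exact h1
  · rcases h2 with h2 | h2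
    · exact h2.symm
    · exact absurd (lt_trans h1 h2) (lt_irrefl _)

lemma dpos_neg {n : ℕ} {x : ℤ} (hx : x ≠ 0) : dpos n (-x) = 2 * (n : ℤ) - dpos n x := by
  unfold dpos
  split_ifs <;> omega

lemma dle_neg {n : ℕ} {x y : ℤ} (hx : x ≠ 0) (hy : y ≠ 0) (h : dle n x y) :
    dle n (-y) (-x) := by
  rcases h with h | h
  · left; rw [h]
  · right; rw [dpos_neg hy, dpos_neg hx]; omega

lemma choice_le {n k : ℕ} {t : Height2 n k} {q : ℕ} {c : ℤ × ℤ}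
    (h : choiceAt t q c) : q ≤ k := by
  rcases h with ⟨h, _⟩ | ⟨h, _⟩ | ⟨_, h, _⟩ <;> omega

lemma insert_right {n k s : ℕ} (hks : k < s) {t : Height2 n k} {p : ℕ} {c : ℤ × ℤ}
    {T : Height2 n s} (h : insertAt t p c T) (hp : p < k) :
    dle n c.1 (t.top p) ∧ dle n c.2 (t.bot p) := by
  obtain ⟨h1, h2, h3⟩ := h
  have e1 := h2 p (le_refl p) (by omega)
  have e2 := h3 (p + (s - k)) (le_refl _) (by omega)
  have hidx : p + (s - k) - (s - k) = p := by omega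
  rw [hidx] at e2
  constructor
  · have := T.row_top p (p + (s - k)) (by omega) (by omega)
    rwa [e1.1, e2.1] at this
  · have := T.row_bot p (p + (s - k)) (by omega) (by omega)
    rwa [e1.2, e2.2] at this

lemma insert_left {n k s : ℕ} (hks : k < s) {t : Height2 n k} {p : ℕ} {c : ℤ × ℤ}
    {T : Height2 n s} (h : insertAt t p c T) (hp : 0 < p) (hpk : p ≤ k) :
    dle n (t.top (p - 1)) c.1 ∧ dle n (t.bot (p - 1)) c.2 := by
  obtain ⟨h1, h2, h3⟩ := h
  have e1 := h1 (p - 1) (by omega)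
  have e2 := h2 p (le_refl p) (by omega)
  constructor
  · have := T.row_top (p - 1) p (by omega) (by omega)
    rwa [e1.1, e2.1] at this
  · have := T.row_bot (p - 1) p (by omega) (by omega)
    rwa [e1.2, e2.2] at this

/-- Core rigidity lemma: two admissible insertions at locations `p < q` force
`q = p + 1` and both inserted columns equal to column `p` of `t`. -/
lemma core {n s k : ℕ} (hks : k < s) {t : Height2 n k} (h3 : cond3 t)
    {p q : ℕ} (hpq : p < q) {c c' : ℤ × ℤ} {T T' : Height2 n s}
    (hcp : choiceAt t p c) (hip : insertAt t p c T)
    (hcq : choiceAt t q c') (hiq : insertAt t q c' T') :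
    q = p + 1 ∧ c = (t.top p, t.bot p) ∧ c' = (t.top p, t.bot p) := by
  have hqk : q ≤ k := choice_le hcq
  have hpk : p < k := lt_of_lt_of_le hpq hqk
  have ztop : ∀ i < k, t.top i ≠ 0 := fun i hi => (t.letter_top i hi).1
  have zbot : ∀ i < k, t.bot i ≠ 0 := fun i hi => (t.letter_bot i hi).1
  have hR := insert_right hks hip hpk
  have hL := insert_left hks hiq (by omega) hqk
  have hc : (0 < p ∧ c = (t.top (p - 1), -(t.top (p - 1)))) ∨
      c = (-(t.bot p), t.bot p) := by
    rcases hcp with ⟨h0, hc0⟩ | ⟨h0, _⟩ | ⟨h0, h1, hcc⟩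
    · right; subst h0; exact hc0
    · omega
    · rcases hcc with ⟨_, hc0⟩ | ⟨_, hc0⟩
      · left; exact ⟨h0, hc0⟩
      · right; exact hc0
  have hc' : c' = (t.top (q - 1), -(t.top (q - 1))) ∨
      (q < k ∧ c' = (-(t.bot q), t.bot q)) := by
    rcases hcq with ⟨h0, _⟩ | ⟨h0, hc0⟩ | ⟨h0, h1, hcc⟩
    · omega
    · left; subst h0; exact hc0
    · rcases hcc with ⟨_, hc0⟩ | ⟨_, hc0⟩
      · left; exact hc0
      · right; exact ⟨h1, hc0⟩
  rcases hc with ⟨hp1, hc⟩ | hc <;> rcases hc' with hc' | ⟨hqk', hc'⟩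
  · -- c = C1(p), c' = C1(q): contradiction via cond3 at p-1
    exfalso
    have e1 : dle n (-(t.top (p - 1))) (t.bot p) := by simpa [hc] using hR.2
    have e2 : dle n (t.bot (q - 1)) (-(t.top (q - 1))) := by simpa [hc'] using hL.2
    have e3 : dle n (t.bot p) (t.bot (q - 1)) := t.row_bot p (q - 1) (by omega) (by omega)
    have e4 : dle n (-(t.top (q - 1))) (-(t.top (p - 1))) :=
      dle_neg (ztop _ (by omega)) (ztop _ (by omega))
        (t.row_top (p - 1) (q - 1) (by omega) (by omega))
    have eq1 : t.bot p = -(t.top (p - 1)) :=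
      dle_antisymm (dle_trans e3 (dle_trans e2 e4)) e1
    have eq2 : -(t.top (q - 1)) = -(t.top (p - 1)) :=
      dle_antisymm e4 (dle_trans e1 (dle_trans e3 e2))
    have eqp : t.top p = t.top (p - 1) := by
      have u1 : dle n (t.top (p - 1)) (t.top p) := t.row_top (p - 1) p (by omega) hpk
      have u2 : dle n (t.top p) (t.top (q - 1)) := t.row_top p (q - 1) (by omega) (by omega)
      have huw : t.top (q - 1) = t.top (p - 1) := by linarith
      rw [huw] at u2
      exact dle_antisymm u2 u1
    have hpp : p - 1 + 1 = p := by omega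
    have H := (h3 (p - 1) (by omega)).1
    rw [hpp] at H
    exact H ⟨eqp.symm, by linarith⟩
  · -- c = C1(p), c' = C2(q): contradiction via cond3 at p-1
    exfalso
    have g1 : dle n (-(t.top (p - 1))) (t.bot p) := by simpa [hc] using hR.2
    have g2' : dle n (t.top (q - 1)) (-(t.bot q)) := by simpa [hc'] using hL.1
    have g2 : dle n (t.bot q) (-(t.top (q - 1))) := by
      have := dle_neg (ztop _ (by omega)) (neg_ne_zero.mpr (zbot q hqk')) g2'
      simpa using this
    have g3 : dle n (t.bot p) (t.bot q) := t.row_bot p q (by omega) hqk'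
    have g4 : dle n (-(t.top (q - 1))) (-(t.top (p - 1))) :=
      dle_neg (ztop _ (by omega)) (ztop _ (by omega))
        (t.row_top (p - 1) (q - 1) (by omega) (by omega))
    have eq1 : t.bot p = -(t.top (p - 1)) :=
      dle_antisymm (dle_trans g3 (dle_trans g2 g4)) g1
    have eq2 : -(t.top (q - 1)) = -(t.top (p - 1)) :=
      dle_antisymm g4 (dle_trans g1 (dle_trans g3 g2))
    have eqp : t.top p = t.top (p - 1) := by
      have u1 : dle n (t.top (p - 1)) (t.top p) := t.row_top (p - 1) p (by omega) hpk
      have u2 : dle n (t.top p) (t.top (q - 1)) := t.row_top p (q - 1) (by omega) (by omega)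
      have huw : t.top (q - 1) = t.top (p - 1) := by linarith
      rw [huw] at u2
      exact dle_antisymm u2 u1
    have hpp : p - 1 + 1 = p := by omega
    have H := (h3 (p - 1) (by omega)).1
    rw [hpp] at H
    exact H ⟨eqp.symm, by linarith⟩
  · -- c = C2(p), c' = C1(q): the genuine case
    have d1 : dle n (-(t.bot p)) (t.top p) := by simpa [hc] using hR.1
    have d2' : dle n (t.bot (q - 1)) (-(t.top (q - 1))) := by simpa [hc'] using hL.2
    have d2 : dle n (t.top (q - 1)) (-(t.bot (q - 1))) := by
      have := dle_neg (zbot _ (by omega)) (neg_ne_zero.mpr (ztop _ (by omega))) d2'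
      simpa using this
    have d3 : dle n (t.top p) (t.top (q - 1)) := t.row_top p (q - 1) (by omega) (by omega)
    have d4 : dle n (-(t.bot (q - 1))) (-(t.bot p)) :=
      dle_neg (zbot _ hpk) (zbot _ (by omega))
        (t.row_bot p (q - 1) (by omega) (by omega))
    have eqA : t.top p = -(t.bot p) :=
      dle_antisymm (dle_trans d3 (dle_trans d2 d4)) d1
    have eqB : -(t.bot (q - 1)) = -(t.bot p) :=
      dle_antisymm d4 (dle_trans d1 (dle_trans d3 d2))
    have eqC : t.top (q - 1) = t.top p :=
      dle_antisymm (dle_trans d2 (dle_trans d4 d1)) d3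
    by_cases hq : q = p + 1
    · refine ⟨hq, ?_, ?_⟩
      · rw [hc, Prod.mk.injEq]
        exact ⟨by linarith, rfl⟩
      · have hq1 : q - 1 = p := by omega
        rw [hc', hq1, Prod.mk.injEq]
        exact ⟨rfl, by linarith⟩
    · exfalso
      have hq2 : p + 2 ≤ q := by omega
      have hb : t.bot p = t.bot (p + 1) := by
        have u1 : dle n (t.bot p) (t.bot (p + 1)) := t.row_bot p (p + 1) (by omega) (by omega)
        have u2 : dle n (t.bot (p + 1)) (t.bot (q - 1)) :=
          t.row_bot (p + 1) (q - 1) (by omega) (by omega)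
        have huw : t.bot (q - 1) = t.bot p := by linarith
        rw [huw] at u2
        exact dle_antisymm u1 u2
      exact (h3 p (by omega)).2 ⟨hb, eqA⟩
  · -- c = C2(p), c' = C2(q): contradiction via cond3 at q-1
    exfalso
    have f1 : dle n (-(t.bot p)) (t.top p) := by simpa [hc] using hR.1
    have f2 : dle n (t.top (q - 1)) (-(t.bot q)) := by simpa [hc'] using hL.1
    have f3 : dle n (t.top p) (t.top (q - 1)) := t.row_top p (q - 1) (by omega) (by omega)
    have f4 : dle n (-(t.bot q)) (-(t.bot p)) :=
      dle_neg (zbot _ hpk) (zbot _ hqk') (t.row_bot p q (by omega) hqk')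
    have eq1 : t.top (q - 1) = -(t.bot q) :=
      dle_antisymm f2 (dle_trans f4 (dle_trans f1 f3))
    have eq2 : -(t.bot q) = -(t.bot p) :=
      dle_antisymm f4 (dle_trans f1 (dle_trans f3 f2))
    have eq3 : t.bot (q - 1) = t.bot q := by
      have u1 : dle n (t.bot p) (t.bot (q - 1)) := t.row_bot p (q - 1) (by omega) (by omega)
      have u2 : dle n (t.bot (q - 1)) (t.bot q) := t.row_bot (q - 1) q (by omega) hqk'
      have huw : t.bot p = t.bot q := by linarith
      rw [huw] at u1
      exact dle_antisymm u2 u1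
    have hq1 : q - 1 + 1 = q := by omega
    have H := (h3 (q - 1) (by omega)).2
    rw [hq1] at H
    exact H ⟨eq3, by linarith⟩

/-- At a single location the admissible column is unique. -/
lemma choice_unique {n k : ℕ} (hk : 0 < k) {t : Height2 n k} {p : ℕ} {c c' : ℤ × ℤ}
    (h : choiceAt t p c) (h' : choiceAt t p c') : c = c' := by
  have ztop : ∀ i < k, t.top i ≠ 0 := fun i hi => (t.letter_top i hi).1
  have zbot : ∀ i < k, t.bot i ≠ 0 := fun i hi => (t.letter_bot i hi).1
  have key : ∀ {d d' : ℤ × ℤ}, 0 < p → p < k →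
      crit1 t p → d = (t.top (p - 1), -(t.top (p - 1))) →
      crit2 t p → d' = (-(t.bot p), t.bot p) → d = d' := by
    intro d d' hp0 hpk hc1 hd hc2 hd'
    have w1 : dle n (-(t.top (p - 1))) (t.bot p) := hc1.2
    have w2 : dle n (t.bot p) (-(t.top (p - 1))) := by
      have := dle_neg (ztop _ (by omega)) (neg_ne_zero.mpr (zbot _ hpk)) hc2.1
      simpa using this
    have heq : -(t.top (p - 1)) = t.bot p := dle_antisymm w1 w2
    rw [hd, hd', Prod.mk.injEq]
    exact ⟨by linarith, heq⟩
  rcases h with ⟨h0, hc0⟩ | ⟨h0, hc0⟩ | ⟨h0, h1, hcc⟩ <;>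
    rcases h' with ⟨g0, gc0⟩ | ⟨g0, gc0⟩ | ⟨g0, g1, gcc⟩
  · rw [hc0, gc0]
  · omega
  · omega
  · omega
  · rw [hc0, gc0]
  · omega
  · omega
  · omega
  · rcases hcc with ⟨hcr, hc0⟩ | ⟨hcr, hc0⟩ <;> rcases gcc with ⟨gcr, gc0⟩ | ⟨gcr, gc0⟩
    · rw [hc0, gc0]
    · exact key h0 h1 hcr hc0 gcr gc0
    · exact (key g0 g1 gcr gc0 hcr hc0).symm
    · rw [hc0, gc0]

lemma insert_eq_insert {n k s : ℕ} {t : Height2 n k} {p : ℕ} {c : ℤ × ℤ}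
    {T T' : Height2 n s} (h : insertAt t p c T) (h' : insertAt t p c T') :
    ∀ m < s, T.top m = T'.top m ∧ T.bot m = T'.bot m := by
  intro m hm
  obtain ⟨a1, a2, a3⟩ := h
  obtain ⟨b1, b2, b3⟩ := h'
  by_cases h1 : m < p
  · exact ⟨by rw [(a1 m h1).1, (b1 m h1).1], by rw [(a1 m h1).2, (b1 m h1).2]⟩
  · by_cases h2 : m < p + (s - k)
    · exact ⟨by rw [(a2 m (by omega) h2).1, (b2 m (by omega) h2).1],
        by rw [(a2 m (by omega) h2).2, (b2 m (by omega) h2).2]⟩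
    · exact ⟨by rw [(a3 m (by omega) hm).1, (b3 m (by omega) hm).1],
        by rw [(a3 m (by omega) hm).2, (b3 m (by omega) hm).2]⟩

lemma insert_succ_eq {n k s : ℕ} (hks : k < s) {t : Height2 n k} {p : ℕ} (hpk : p < k)
    {T T' : Height2 n s} (h : insertAt t p (t.top p, t.bot p) T)
    (h' : insertAt t (p + 1) (t.top p, t.bot p) T') :
    ∀ m < s, T.top m = T'.top m ∧ T.bot m = T'.bot m := by
  intro m hm
  obtain ⟨a1, a2, a3⟩ := h
  obtain ⟨b1, b2, b3⟩ := h'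
  have hd : 1 ≤ s - k := by omega
  by_cases h1 : m < p
  · exact ⟨by rw [(a1 m h1).1, (b1 m (by omega)).1], by rw [(a1 m h1).2, (b1 m (by omega)).2]⟩
  · by_cases h2 : m < p + (s - k)
    · have hT := a2 m (by omega) h2
      by_cases h3 : m < p + 1
      · have hmp : m = p := by omega
        have hT' := b1 m h3
        rw [hmp] at hT hT' ⊢
        exact ⟨by rw [hT.1, hT'.1], by rw [hT.2, hT'.2]⟩
      · have hT' := b2 m (by omega) (by omega)
        exact ⟨by rw [hT.1, hT'.1], by rw [hT.2, hT'.2]⟩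
    · have hT := a3 m (by omega) hm
      by_cases h3 : m < p + 1 + (s - k)
      · have hT' := b2 m (by omega) h3
        have hidx : m - (s - k) = p := by omega
        rw [hidx] at hT
        exact ⟨by rw [hT.1, hT'.1], by rw [hT.2, hT'.2]⟩
      · have hT' := b3 m (by omega) hm
        exact ⟨by rw [hT.1, hT'.1], by rw [hT.2, hT'.2]⟩

end Aux

/-- A classical height-two tableau of width `k < s` has at most two
filling locations; if it has two, they are consecutive integers, and the result
`F_{2,s}(t)` of the height-two fill map does not depend on the choice. -/
theorem fillLoc_unique (n s k : ℕ) (hn : 2 ≤ n) (hk : 0 < k) (hks : k < s)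
    (t : Height2 n k) (hcl : classicalTab t) :
    (∀ i j, fillLoc t s i → fillLoc t s j → i = j ∨ i + 1 = j ∨ j + 1 = i) ∧
    (∀ i j (ci cj : ℤ × ℤ) (Ti Tj : Height2 n s),
        choiceAt t i ci → insertAt t i ci Ti → affineTab Ti →
        choiceAt t j cj → insertAt t j cj Tj → affineTab Tj →
        ∀ m < s, Ti.top m = Tj.top m ∧ Ti.bot m = Tj.bot m) := by
  have h3 := hcl.1
  constructor
  · rintro i j ⟨hi, ci, Ti, hci, hii, -⟩ ⟨hj, cj, Tj, hcj, hij, -⟩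
    rcases lt_trichotomy i j with h | h | h
    · right; left; exact (core hks h3 h hci hii hcj hij).1.symm
    · left; exact h
    · right; right; exact (core hks h3 h hcj hij hci hii).1.symm
  · intro i j ci cj Ti Tj hci hii _ hcj hij _ m hm
    rcases lt_trichotomy i j with h | h | h
    · obtain ⟨hq, e1, e2⟩ := core hks h3 h hci hii hcj hij
      rw [e1] at hii
      rw [e2, hq] at hij
      have hik : i < k := by have := choice_le hcj; omega
      exact insert_succ_eq hks hik hii hij m hm
    · subst h
      have : ci = cj := choice_unique hk hci hcj
      rw [this] at hii
      exact insert_eq_insert hii hij m hm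
    · obtain ⟨hq, e1, e2⟩ := core hks h3 h hcj hij hci hii
      rw [e1] at hij
      rw [e2, hq] at hii
      have hjk : j < k := by have := choice_le hci; omega
      have := insert_succ_eq hks hjk hij hii m hm
      exact ⟨this.1.symm, this.2.symm⟩
end

section
/- Let $T$ be a $C_2$ tableau with $C(T)<D(T)$, $e_1T\ne0$, and $e_2T\ne0$. Then $e_1e_2T=e_2e_1T\ne0$ (a degree-2 commutation relation holds above $T$). -/
/-! The `C₂` alphabet `1 < 2 < 2̄ < 1̄`, encoded as the integers `1, 2, -2, -1`. -/

/-- Position of a letter of the `C₂` alphabet: `1 ↦ 1`, `2 ↦ 2`, `2̄ ↦ 3`, `1̄ ↦ 4`. -/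
def cpos (x : ℤ) : ℤ := if 0 < x then x else 5 + x

/-- A `C₂` tableau on a two-row Young diagram with row lengths `p ≥ q`:
rows weakly increase, columns strictly increase, no column contains both `1` and `1̄`,
and no configuration with `2` in the top row of a column and `2̄` in the bottom row of
a weakly later column. -/
structure C2Tab (p q : ℕ) where
  hq : q ≤ p
  top : ℕ → ℤ
  bot : ℕ → ℤ
  htop : ∀ i < p, top i = 1 ∨ top i = 2 ∨ top i = -2 ∨ top i = -1
  hbot : ∀ i < q, bot i = 1 ∨ bot i = 2 ∨ bot i = -2 ∨ bot i = -1
  row_top : ∀ i j, i ≤ j → j < p → cpos (top i) ≤ cpos (top j)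
  row_bot : ∀ i j, i ≤ j → j < q → cpos (bot i) ≤ cpos (bot j)
  col_strict : ∀ i < q, cpos (top i) < cpos (bot i)
  no_one_barone : ∀ i < q, ¬ (top i = 1 ∧ bot i = -1)
  no_config : ∀ i j, i ≤ j → j < q → ¬ (top i = 2 ∧ bot j = -2)

/-- The column word of a `C₂` tableau: for each two-row column, bottom then top entry,
left to right, followed by the one-row entries left to right (length `p + q`). -/
def cword {p q : ℕ} (T : C2Tab p q) (m : ℕ) : ℤ :=
  if m < 2 * q then (if m % 2 = 0 then T.bot (m / 2) else T.top (m / 2)) else T.top (m - q)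

/-- The `i`-signature of a letter (colors `i : Fin 2`, with `0` for color 1 and `1` for
color 2): for color 1, `2, 1̄ ↦ +` and `1, 2̄ ↦ −`; for color 2, `2̄ ↦ +`, `2 ↦ −`,
`1, 1̄ ↦ ∗` (recorded as `0`). -/
def csig (i : Fin 2) (x : ℤ) : ℤ :=
  if i = 0 then (if x = 2 ∨ x = -1 then 1 else -1)
  else (if x = -2 then 1 else if x = 2 then -1 else 0)

def plusCount {p q : ℕ} (T : C2Tab p q) (i : Fin 2) (a b : ℕ) : ℕ :=
  ((Finset.Ico a b).filter (fun m => csig i (cword T m) = 1)).card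

def minusCount {p q : ℕ} (T : C2Tab p q) (i : Fin 2) (a b : ℕ) : ℕ :=
  ((Finset.Ico a b).filter (fun m => csig i (cword T m) = -1)).card

/-- Position `m` of the column word carries a `+` of the `i`-signature surviving the
reduction (removal of `+ ∗⋯∗ −` factors). -/
def unmatchedPlus {p q : ℕ} (T : C2Tab p q) (i : Fin 2) (m : ℕ) : Prop :=
  m < p + q ∧ csig i (cword T m) = 1 ∧
  ∀ j, m < j → j < p + q → minusCount T i (m + 1) (j + 1) ≤ plusCount T i (m + 1) (j + 1)

/-- The Kashiwara operator `e_i` acts at position `m`: the leftmost `+` of the reduced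
`i`-signature. -/
def actsAt {p q : ℕ} (T : C2Tab p q) (i : Fin 2) (m : ℕ) : Prop :=
  unmatchedPlus T i m ∧ ∀ m' < m, csig i (cword T m') = 1 → ¬ unmatchedPlus T i m'

/-- The raised value of a letter: `e_1` sends `2 ↦ 1`, `1̄ ↦ 2̄`; `e_2` sends `2̄ ↦ 2`. -/
def raiseLetter (i : Fin 2) (x : ℤ) : ℤ := if i = 0 then (if x = 2 then 1 else -2) else 2

/-- `e_i T = T'` (in particular `e_i T ≠ 0`). -/
def eRel {p q : ℕ} (i : Fin 2) (T T' : C2Tab p q) : Prop :=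
  ∃ m, actsAt T i m ∧ cword T' m = raiseLetter i (cword T m) ∧
    ∀ m', m' < p + q → m' ≠ m → cword T' m' = cword T m'

/-- `A(T)` = number of `2̄`'s in the top row. -/
def Astat {p q : ℕ} (T : C2Tab p q) : ℕ :=
  ((Finset.range p).filter (fun i => T.top i = -2)).card

/-- `B(T)` = number of `2`'s in the top row plus number of `1̄`'s in the bottom row. -/
def Bstat {p q : ℕ} (T : C2Tab p q) : ℕ :=
  ((Finset.range p).filter (fun i => T.top i = 2)).card +
  ((Finset.range q).filter (fun i => T.bot i = -1)).card

/-- `C(T)` = number of `2`'s in the top row. -/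
def Cstat {p q : ℕ} (T : C2Tab p q) : ℕ :=
  ((Finset.range p).filter (fun i => T.top i = 2)).card

/-- `D(T)` = number of `2̄`'s in the bottom row. -/
def Dstat {p q : ℕ} (T : C2Tab p q) : ℕ :=
  ((Finset.range q).filter (fun i => T.bot i = -2)).card

/-! Let `x` be the leftmost column with a `2̄` at the bottom. Its top entry is `1` and the bottom
entries to its left are `1`s and `2`s, so in the `1`-signature every `+` up to column `x` is
cancelled by the `1` right above it: `e₁` acts strictly to the right of column `x`, on a `2` or a
`1̄`. In the `2`-signature, every `2` right of column `x` is a top `2`, and all bottom `2̄`s lie to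
its left; since there are fewer top `2`s than bottom `2̄`s, the `2̄` of column `x` survives the
reduction and is raised by `e₂`. Neither operator disturbs the other's reduced signature at its
position, so both composites change the same two letters in the same way. -/

open Finset

def topPos (q k : ℕ) : ℕ := if k < q then 2 * k + 1 else k + q

lemma csig_zero_eq_one_iff {y : ℤ} : csig 0 y = 1 ↔ y = 2 ∨ y = -1 := by
  simp only [csig]; split_ifs <;> simp_all

lemma csig_one_eq_one_iff {y : ℤ} : csig 1 y = 1 ↔ y = -2 := by
  simp only [csig, Fin.one_eq_zero_iff]; split_ifs <;> simp_all

lemma csig_one_eq_neg_one_iff {y : ℤ} : csig 1 y = -1 ↔ y = 2 := by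
  simp only [csig, Fin.one_eq_zero_iff]; split_ifs <;> simp_all

lemma csig_one_raiseLetter_zero {y : ℤ} (hy : csig 0 y = 1) :
    csig 1 (raiseLetter 0 y) ≠ -1 ∧ csig 1 y ≠ 1 := by
  rcases csig_zero_eq_one_iff.1 hy with rfl | rfl <;> decide

section Signature

variable {p q : ℕ} {T T' : C2Tab p q} {i : Fin 2} {m : ℕ}

lemma unmatchedPlus.mono (h : unmatchedPlus T i m) (hm : csig i (cword T' m) = 1)
    (hminus : ∀ n, m < n → n < p + q → csig i (cword T' n) = -1 → csig i (cword T n) = -1)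
    (hplus : ∀ n, m < n → n < p + q → csig i (cword T n) = 1 → csig i (cword T' n) = 1) :
    unmatchedPlus T' i m := by
  refine ⟨h.1, hm, fun j hmj hj => ?_⟩
  have hT' : minusCount T' i (m + 1) (j + 1) ≤ minusCount T i (m + 1) (j + 1) :=
    card_le_card fun n hn => by
      simp only [mem_filter, mem_Ico] at hn ⊢
      exact ⟨hn.1, hminus n (by omega) (by omega) hn.2⟩
  have hT : plusCount T i (m + 1) (j + 1) ≤ plusCount T' i (m + 1) (j + 1) :=
    card_le_card fun n hn => by
      simp only [mem_filter, mem_Ico] at hn ⊢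
      exact ⟨hn.1, hplus n (by omega) (by omega) hn.2⟩
  exact hT'.trans ((h.2.2 j hmj hj).trans hT)

lemma unmatchedPlus_congr (h : ∀ n, m ≤ n → n < p + q → cword T' n = cword T n) :
    unmatchedPlus T' i m ↔ unmatchedPlus T i m := by
  refine ⟨fun h' => h'.mono ?_ ?_ ?_, fun h' => h'.mono ?_ ?_ ?_⟩
  · rw [← h m le_rfl h'.1]; exact h'.2.1
  · intro n hmn hn; rw [h n hmn.le hn]; exact id
  · intro n hmn hn; rw [h n hmn.le hn]; exact id
  · rw [h m le_rfl h'.1]; exact h'.2.1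
  · intro n hmn hn; rw [h n hmn.le hn]; exact id
  · intro n hmn hn; rw [h n hmn.le hn]; exact id

lemma not_unmatchedPlus_of_succ (hm : m + 1 < p + q) (hnext : csig i (cword T (m + 1)) = -1) :
    ¬ unmatchedPlus T i m := by
  intro h
  have hcount := h.2.2 (m + 1) m.lt_succ_self hm
  simp only [minusCount, plusCount, Ico_add_one_right_eq_Icc, Icc_self, filter_singleton,
    hnext] at hcount
  norm_num at hcount

lemma actsAt.of_agree_of_ge {a : ℕ} (h : actsAt T i m) (ham : a ≤ m)
    (hagree : ∀ n, a ≤ n → n < p + q → cword T' n = cword T n)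
    (hbelow : ∀ n < a, ¬ unmatchedPlus T' i n) : actsAt T' i m := by
  refine ⟨(unmatchedPlus_congr fun n hn => hagree n (ham.trans hn)).2 h.1, fun n hnm _ hn => ?_⟩
  by_cases hna : n < a
  · exact hbelow n hna hn
  · have hnT := (unmatchedPlus_congr fun k hk => hagree k (by omega)).1 hn
    exact h.2 n hnm hnT.2.1 hnT

end Signature

namespace C2Tab

variable {p q : ℕ} (T : C2Tab p q)

lemma cword_two_mul {i : ℕ} (hi : i < q) : cword T (2 * i) = T.bot i := by
  simp [cword, show 2 * i < 2 * q by omega]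

lemma cword_topPos (k : ℕ) : cword T (topPos q k) = T.top k := by
  unfold topPos cword
  split_ifs <;> first | omega | (congr 1; omega)

lemma cword_two_mul_add_one {i : ℕ} (hi : i < q) : cword T (2 * i + 1) = T.top i := by
  simpa [topPos, hi] using T.cword_topPos i

lemma cword_cases {m : ℕ} (hm : m < p + q) :
    (∃ i < q, m = 2 * i ∧ cword T m = T.bot i) ∨
      ∃ k < p, m = topPos q k ∧ cword T m = T.top k := by
  have hq := T.hq
  by_cases h : m < 2 * q ∧ m % 2 = 0
  · refine Or.inl ⟨m / 2, by omega, by omega, ?_⟩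
    rw [← T.cword_two_mul (by omega : m / 2 < q)]
    congr 1
    omega
  · obtain ⟨k, hk, rfl⟩ : ∃ k < p, m = topPos q k :=
      ⟨if m < 2 * q then m / 2 else m - q, by split_ifs <;> omega, by
        unfold topPos; split_ifs <;> omega⟩
    exact Or.inr ⟨k, hk, rfl, T.cword_topPos k⟩

variable {T} {i k : ℕ}

lemma top_eq_one_of_bot_eq_two (hi : i < q) (h : T.bot i = 2) : T.top i = 1 := by
  have := T.col_strict i hi
  rcases T.htop i (hi.trans_le T.hq) with h' | h' | h' | h' <;> simp_all [cpos]

lemma bot_eq_barOne_of_top_eq_two (hi : i < q) (h : T.top i = 2) : T.bot i = -1 := by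
  have := T.col_strict i hi
  have := T.no_config i i le_rfl hi
  rcases T.hbot i hi with h' | h' | h' | h' <;> simp_all [cpos]

lemma top_ne_barOne (hi : i < q) : T.top i ≠ -1 := by
  have := T.col_strict i hi
  rcases T.hbot i hi with h' | h' | h' | h' <;> intro h <;> simp_all [cpos]

lemma two_mul_lt_topPos (hi : i < q) (hbi : T.bot i = -2) (htk : T.top k = 2) :
    2 * i < topPos q k := by
  unfold topPos
  split_ifs with hkq
  · have : ¬ k ≤ i := fun hki => T.no_config k i hki hi ⟨htk, hbi⟩
    omega
  · omega

/-- The `+` of `e₁` carried by a bottom `2` is cancelled by the `1` above it, and a two-row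
column without `1̄` at the bottom carries no other `+` of `e₁`. -/
lemma not_unmatchedPlus_zero_of_bot_ne (hi : i < q) (hb : T.bot i ≠ -1) :
    ¬ unmatchedPlus T 0 (2 * i) ∧ ¬ unmatchedPlus T 0 (2 * i + 1) := by
  have hq := T.hq
  constructor
  · intro h
    have hbi : T.bot i = 2 := by
      have := h.2.1
      rw [T.cword_two_mul hi, csig_zero_eq_one_iff] at this
      exact this.resolve_right hb
    refine not_unmatchedPlus_of_succ (by omega) ?_ h
    rw [T.cword_two_mul_add_one hi, top_eq_one_of_bot_eq_two hi hbi]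
    decide
  · intro h
    have := h.2.1
    rw [T.cword_two_mul_add_one hi, csig_zero_eq_one_iff] at this
    rcases this with h2 | h2
    · exact hb (bot_eq_barOne_of_top_eq_two hi h2)
    · exact top_ne_barOne hi h2

lemma not_unmatchedPlus_zero_of_lt {x m : ℕ} (hx : x < q) (hb : ∀ i ≤ x, T.bot i ≠ -1)
    (hm : m < 2 * x + 2) : ¬ unmatchedPlus T 0 m := by
  have key := not_unmatchedPlus_zero_of_bot_ne (T := T) (i := m / 2) (by omega) (hb _ (by omega))
  rcases Nat.even_or_odd' m with ⟨j, rfl | rfl⟩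
  · simpa [show 2 * j / 2 = j by omega] using key.1
  · simpa [show (2 * j + 1) / 2 = j by omega] using key.2

variable {V : C2Tab p q} {x m : ℕ}

structure IsFirstBarTwoBot (T : C2Tab p q) (x : ℕ) : Prop where
  lt : x < q
  bot_eq : T.bot x = -2
  bot_ne : ∀ i < x, T.bot i ≠ -2

lemma exists_isFirstBarTwoBot (h : 0 < Dstat T) : ∃ x, T.IsFirstBarTwoBot x := by
  classical
  have hex : ∃ i, i < q ∧ T.bot i = -2 := by
    obtain ⟨i, hi⟩ := card_pos.1 h
    simp only [mem_filter, mem_range] at hi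
    exact ⟨i, hi⟩
  obtain ⟨hlt, heq⟩ := Nat.find_spec hex
  exact ⟨_, ⟨hlt, heq, fun i hi hbi => Nat.find_min hex hi ⟨hi.trans hlt, hbi⟩⟩⟩

namespace IsFirstBarTwoBot

variable (hx : T.IsFirstBarTwoBot x)
include hx

lemma top_eq_one : T.top x = 1 := by
  have := T.col_strict x hx.lt
  have := T.no_config x x le_rfl hx.lt
  have := hx.bot_eq
  rcases T.htop x (hx.lt.trans_le T.hq) with h | h | h | h <;> simp_all [cpos]

lemma bot_of_lt {i : ℕ} (hi : i < x) : T.bot i = 1 ∨ T.bot i = 2 := by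
  have := T.row_bot i x hi.le hx.lt
  have := hx.bot_ne i hi
  have := hx.bot_eq
  rcases T.hbot i (hi.trans hx.lt) with h | h | h | h <;> simp_all [cpos]

lemma bot_ne_barOne {i : ℕ} (hi : i ≤ x) : T.bot i ≠ -1 := by
  rcases hi.lt_or_eq with hi | rfl
  · rcases hx.bot_of_lt hi with h | h <;> (rw [h]; decide)
  · rw [hx.bot_eq]; decide

lemma cword_ne_barTwo (hm : m < 2 * x) : cword T m ≠ -2 := by
  have := hx.lt
  rcases Nat.even_or_odd' m with ⟨j, rfl | rfl⟩
  · rw [T.cword_two_mul (by omega)]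
    exact hx.bot_ne j (by omega)
  · rw [T.cword_two_mul_add_one (by omega)]
    intro h
    have := T.col_strict j (by omega)
    rcases hx.bot_of_lt (i := j) (by omega) with h' | h' <;> simp_all [cpos]

lemma le_of_unmatchedPlus_zero (h : unmatchedPlus T 0 m) : 2 * x + 2 ≤ m := by
  by_contra hm
  exact not_unmatchedPlus_zero_of_lt hx.lt (fun _ => hx.bot_ne_barOne) (by omega) h

lemma exists_topPos_of_cword_eq_two (hxm : 2 * x < m) (hm : m < p + q) (h2 : cword T m = 2) :
    ∃ k < p, T.top k = 2 ∧ topPos q k = m := by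
  rcases T.cword_cases hm with ⟨i, hi, rfl, hc⟩ | ⟨k, hk, rfl, hc⟩
  · have := T.row_bot x i (by omega) hi
    rw [← hc, h2, hx.bot_eq] at this
    norm_num [cpos] at this
  · exact ⟨k, hk, hc ▸ h2, rfl⟩

lemma minusCount_one_le_Cstat {b : ℕ} (hb : b ≤ p + q) :
    minusCount T 1 (2 * x + 1) b ≤ Cstat T := by
  calc minusCount T 1 (2 * x + 1) b
      ≤ (((range p).filter (fun k => T.top k = 2)).image (topPos q)).card := by
        refine card_le_card fun n hn => ?_
        simp only [mem_filter, mem_Ico, csig_one_eq_neg_one_iff] at hn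
        obtain ⟨k, hk, htk, rfl⟩ := hx.exists_topPos_of_cword_eq_two (by omega) (by omega) hn.2
        exact mem_image_of_mem _ (by simp [hk, htk])
    _ ≤ Cstat T := card_image_le

/-- All bottom `2̄`'s lie to the left of any top `2`. -/
lemma Dstat_sub_one_le_plusCount_one {b : ℕ} (hxm : 2 * x < m) (h2 : cword T m = 2)
    (hmb : m < b) (hb : b ≤ p + q) : Dstat T - 1 ≤ plusCount T 1 (2 * x + 1) b := by
  obtain ⟨k, -, htk, rfl⟩ := hx.exists_topPos_of_cword_eq_two hxm (by omega) h2
  have hx_mem : x ∈ (range q).filter (fun i => T.bot i = -2) := by simp [hx.lt, hx.bot_eq]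
  calc Dstat T - 1 = (((range q).filter (fun i => T.bot i = -2)).erase x).card :=
        (card_erase_of_mem hx_mem).symm
    _ = ((((range q).filter (fun i => T.bot i = -2)).erase x).image (2 * ·)).card :=
        (card_image_of_injective _ (mul_right_injective₀ two_ne_zero)).symm
    _ ≤ plusCount T 1 (2 * x + 1) b := by
        refine card_le_card fun n hn => ?_
        simp only [mem_image, mem_erase, mem_filter, mem_range] at hn
        obtain ⟨i, ⟨hix, hi, hbi⟩, rfl⟩ := hn
        have hxi : x < i := lt_of_le_of_ne (not_lt.1 fun h => hx.bot_ne i h hbi) (Ne.symm hix)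
        have := two_mul_lt_topPos hi hbi htk
        simp only [mem_filter, mem_Ico, T.cword_two_mul hi, hbi, csig_one_eq_one_iff, and_true]
        omega

lemma actsAt_one (hCD : Cstat T < Dstat T) : actsAt T 1 (2 * x) := by
  have hq := T.hq
  have hxq := hx.lt
  refine ⟨⟨by omega, by rw [T.cword_two_mul hxq, hx.bot_eq, csig_one_eq_one_iff],
    fun j hj hjpq => ?_⟩, fun n hn hs _ => hx.cword_ne_barTwo hn (csig_one_eq_one_iff.1 hs)⟩
  by_cases hM : ∃ n, 2 * x < n ∧ n < j + 1 ∧ cword T n = 2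
  · obtain ⟨n, hxn, hnj, hn2⟩ := hM
    have := hx.minusCount_one_le_Cstat (b := j + 1) (by omega)
    have := hx.Dstat_sub_one_le_plusCount_one hxn hn2 hnj (by omega)
    omega
  · have : minusCount T 1 (2 * x + 1) (j + 1) = 0 := by
      refine card_eq_zero.2 (filter_eq_empty_iff.2 fun n hn h => hM ⟨n, ?_⟩)
      simp only [mem_Ico] at hn
      exact ⟨by omega, by omega, csig_one_eq_neg_one_iff.1 h⟩
    omega

/-- Under `C(T) < D(T)` this is `e₂ T`. -/
def raise : C2Tab p q where
  hq := T.hq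
  top := T.top
  bot := Function.update T.bot x 2
  htop := T.htop
  hbot i hi := by
    rcases eq_or_ne i x with rfl | hix
    · simp
    · rw [Function.update_of_ne hix]
      exact T.hbot i hi
  row_top := T.row_top
  row_bot i j hij hj := by
    by_cases hjx : j = x <;> by_cases hix : i = x
    · subst hix hjx; exact le_rfl
    · subst hjx
      rw [Function.update_of_ne hix, Function.update_self]
      rcases hx.bot_of_lt (i := i) (by omega) with h | h <;> norm_num [h, cpos]
    · subst hix
      rw [Function.update_self, Function.update_of_ne hjx]
      calc cpos 2 ≤ cpos (-2) := by decide
        _ ≤ cpos (T.bot j) := hx.bot_eq ▸ T.row_bot i j hij hj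
    · rw [Function.update_of_ne hix, Function.update_of_ne hjx]
      exact T.row_bot i j hij hj
  col_strict i hi := by
    rcases eq_or_ne i x with rfl | hix
    · rw [Function.update_self, hx.top_eq_one]; decide
    · rw [Function.update_of_ne hix]
      exact T.col_strict i hi
  no_one_barone i hi := by
    rcases eq_or_ne i x with rfl | hix
    · simp
    · rw [Function.update_of_ne hix]
      exact T.no_one_barone i hi
  no_config i j hij hj := by
    rcases eq_or_ne j x with rfl | hjx
    · simp
    · rw [Function.update_of_ne hjx]
      exact T.no_config i j hij hj

lemma cword_raise_self : cword hx.raise (2 * x) = 2 := by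
  rw [cword_two_mul _ hx.lt]
  exact Function.update_self ..

lemma cword_raise_of_ne (hm : m ≠ 2 * x) : cword hx.raise m = cword T m := by
  unfold cword
  split_ifs
  · exact Function.update_of_ne (by omega) ..
  all_goals rfl

lemma eRel_one_raise (hCD : Cstat T < Dstat T) : eRel 1 T hx.raise :=
  ⟨2 * x, hx.actsAt_one hCD, hx.cword_raise_self, fun _ _ hn => hx.cword_raise_of_ne hn⟩

lemma of_eRel_zero (hV : eRel 0 T V) : V.IsFirstBarTwoBot x := by
  obtain ⟨m, hm, -, hVne⟩ := hV
  have hxm := hx.le_of_unmatchedPlus_zero hm.1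
  have hq := T.hq
  have hxq := hx.lt
  have hcol : ∀ i ≤ x, V.bot i = T.bot i := fun i hi => by
    rw [← V.cword_two_mul (by omega), hVne _ (by omega) (by omega), T.cword_two_mul (by omega)]
  exact ⟨hxq, (hcol x le_rfl).trans hx.bot_eq, fun i hi => hcol i hi.le ▸ hx.bot_ne i hi⟩

lemma eRel_one_raise_of_eRel_zero (hCD : Cstat T < Dstat T) (hV : eRel 0 T V)
    (hxV : V.IsFirstBarTwoBot x) : eRel 1 V hxV.raise := by
  obtain ⟨m, hm, hVm, hVne⟩ := hV
  have hletter := csig_one_raiseLetter_zero hm.1.2.1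
  refine ⟨2 * x, ⟨(hx.actsAt_one hCD).1.mono ?_ ?_ ?_, fun n hn hs _ =>
    hxV.cword_ne_barTwo hn (csig_one_eq_one_iff.1 hs)⟩, hxV.cword_raise_self,
    fun _ _ hn => hxV.cword_raise_of_ne hn⟩
  · rw [V.cword_two_mul hxV.lt, hxV.bot_eq, csig_one_eq_one_iff]
  · intro n _ hn hs
    rcases eq_or_ne n m with rfl | hnm
    · exact absurd (hVm ▸ hs) hletter.1
    · rwa [hVne n hn hnm] at hs
  · intro n _ hn hs
    rcases eq_or_ne n m with rfl | hnm
    · exact absurd hs hletter.2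
    · rwa [hVne n hn hnm]

lemma eRel_zero_raise (hV : eRel 0 T V) (hxV : V.IsFirstBarTwoBot x) :
    eRel 0 hx.raise hxV.raise := by
  obtain ⟨m, hm, hVm, hVne⟩ := hV
  have hxm := hx.le_of_unmatchedPlus_zero hm.1
  have hbot : ∀ i ≤ x, hx.raise.bot i ≠ -1 := fun i hi => by
    rcases eq_or_ne i x with rfl | hix
    · simp [raise]
    · simpa [raise, Function.update_of_ne hix] using hx.bot_ne_barOne hi
  refine ⟨m, hm.of_agree_of_ge hxm (fun n hn _ => hx.cword_raise_of_ne (by omega))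
    (fun n hn => not_unmatchedPlus_zero_of_lt hx.lt hbot hn), ?_, fun n hn hnm => ?_⟩
  · rw [hxV.cword_raise_of_ne (by omega), hVm, hx.cword_raise_of_ne (by omega)]
  · rcases eq_or_ne n (2 * x) with rfl | hnx
    · rw [hxV.cword_raise_self, hx.cword_raise_self]
    · rw [hxV.cword_raise_of_ne hnx, hVne n hn hnm, hx.cword_raise_of_ne hnx]

end IsFirstBarTwoBot

end C2Tab

theorem degree_two_relation_CltD_general (p q : ℕ) (T : C2Tab p q)
    (hCD : Cstat T < Dstat T)
    (h1 : ∃ U, eRel 0 T U) :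
    ∃ (U V W W' : C2Tab p q),
      eRel 1 T U ∧ eRel 0 U W ∧ eRel 0 T V ∧ eRel 1 V W' ∧
      ∀ m < p + q, cword W m = cword W' m := by
  obtain ⟨V, hV⟩ := h1
  obtain ⟨x, hx⟩ := C2Tab.exists_isFirstBarTwoBot ((Nat.zero_le _).trans_lt hCD)
  have hxV := hx.of_eRel_zero hV
  exact ⟨hx.raise, V, hxV.raise, hxV.raise, hx.eRel_one_raise hCD, hx.eRel_zero_raise hV hxV, hV,
    hx.eRel_one_raise_of_eRel_zero hCD hV hxV, fun _ _ => rfl⟩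

/-- If `T` is a `C₂` tableau with `C(T) < D(T)`, `e₁T ≠ 0` and
`e₂T ≠ 0`, then `e₁e₂T = e₂e₁T ≠ 0`: a degree-2 commutation relation holds above `T`. -/
theorem degree_two_relation_CltD (p q : ℕ) (T : C2Tab p q)
    (hCD : Cstat T < Dstat T)
    (h1 : ∃ U, eRel 0 T U) (h2 : ∃ U, eRel 1 T U) :
    ∃ (U V W W' : C2Tab p q),
      eRel 1 T U ∧ eRel 0 U W ∧ eRel 0 T V ∧ eRel 1 V W' ∧
      ∀ m < p + q, cword W m = cword W' m :=
  degree_two_relation_CltD_general p q T hCD h1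
end
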